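/- arXiv:2002.01203 — 2 statements merged into one kernel-verified Lean document; each statement's English description precedes it below -/
import Mathlib

section
/- On ℝⁿ with n ≥ 4, let b₂(x) = e₁ + Σ_{i=2}^{n−1} x^{i+1} e_i and fix i with 1 ≤ i ≤ n−3. Let D^{(i)}(x) = span{b₂(x), eₙ, e_{n−1}, …, e_{n−i}} ⊆ ℝⁿ. Then: (1) for every k with n−i+1 ≤ k ≤ n, the constant vector field e_k satisfies [e_k, b₂](x) = e_{k−1} ∈ D^{(i)}(x) and [e_k, e_j] = 0 for all j, so e_k is a Cauchy characteristic vector field of D^{(i)}; (2) [e_{n−i}, b₂](x) = e_{n−i−1}, and e_{n−i−1} ∉ D^{(i)}(x) for every x ∈ ℝⁿ. -/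
/-- `b₂(x) = e₁ + Σ_{i=2}^{n−1} x^{i+1} e_i` (componentwise, 0-based indices). -/
noncomputable def chainedB2 (n : ℕ) : (Fin n → ℝ) → (Fin n → ℝ) :=
  fun x j => if j.val = 0 then 1 else if h : j.val + 1 < n then x ⟨j.val + 1, h⟩ else 0

/-- The derived flag `D^{(i)}(x) = span{b₂(x), eₙ, e_{n−1}, …, e_{n−i}}` at a point `x`,
the standard basis vectors `e_k` (1-based `k ∈ {n−i, …, n}`) having 0-based
indices `m` with `n − 1 − i ≤ m`. -/
noncomputable def derivedFlag (n i : ℕ) (x : Fin n → ℝ) : Submodule ℝ (Fin n → ℝ) :=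
  Submodule.span ℝ (insert (chainedB2 n x)
    {v : Fin n → ℝ | ∃ m : Fin n, n - 1 - i ≤ m.val ∧ v = Pi.single m 1})


/-!
`b₂` is affine: `b₂(x) = e₁ + S x`, where the shift `S` sends `e_k` to `e_{k-1}` for `k ≥ 3`
and kills `e₁`, `e₂`. Hence `[e_k, b₂] = S e_k`, while constant fields commute.
The functional `v ↦ v_t - b₂(x)_t · v_1` kills `b₂(x)` (whose first coordinate is `1`) and every
`e_m` spanning the flag, but not `e_t` when `t` lies strictly between `1` and those `m`.
-/

namespace VectorField

variable {𝕜 E : Type*} [NontriviallyNormedField 𝕜] [NormedAddCommGroup E] [NormedSpace 𝕜 E]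

lemma lieBracket_const_left (v : E) (W : E → E) (x : E) :
    lieBracket 𝕜 (fun _ => v) W x = fderiv 𝕜 W x v := by
  simp [lieBracket_eq]

lemma lieBracket_const_const (v w x : E) :
    lieBracket 𝕜 (fun _ => v) (fun _ => w) x = 0 := by
  simp [lieBracket_const_left]

end VectorField

open VectorField

noncomputable def chainedShift (n : ℕ) : (Fin n → ℝ) →L[ℝ] (Fin n → ℝ) :=
  ContinuousLinearMap.pi fun j =>
    if h : j.val ≠ 0 ∧ j.val + 1 < n then ContinuousLinearMap.proj ⟨j.val + 1, h.2⟩ else 0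

lemma chainedB2_eq_const_add (n : ℕ) :
    chainedB2 n = fun x => chainedB2 n 0 + chainedShift n x := by
  funext x j
  simp only [chainedB2, chainedShift, Pi.add_apply, ContinuousLinearMap.pi_apply]
  split_ifs <;> simp_all

lemma fderiv_chainedB2 (n : ℕ) (x : Fin n → ℝ) :
    fderiv ℝ (chainedB2 n) x = chainedShift n := by
  rw [chainedB2_eq_const_add n]
  exact ((chainedShift n).hasFDerivAt.const_add _).fderiv

lemma chainedShift_single (n : ℕ) (k : Fin n) (hk : 2 ≤ k.val) :
    chainedShift n (Pi.single k 1) =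
      Pi.single (⟨k.val - 1, Nat.lt_of_le_of_lt (Nat.sub_le _ _) k.isLt⟩ : Fin n) 1 := by
  funext j
  simp only [chainedShift, ContinuousLinearMap.pi_apply, Pi.single_apply, Fin.ext_iff]
  split_ifs <;> simp_all [Pi.single_apply, Fin.ext_iff] <;> omega

lemma lieBracket_single_chainedB2 (n : ℕ) (k : Fin n) (hk : 2 ≤ k.val) (x : Fin n → ℝ) :
    lieBracket ℝ (fun _ => Pi.single k (1 : ℝ)) (chainedB2 n) x =
      Pi.single (⟨k.val - 1, Nat.lt_of_le_of_lt (Nat.sub_le _ _) k.isLt⟩ : Fin n) 1 := by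
  rw [lieBracket_const_left, fderiv_chainedB2, chainedShift_single n k hk]

lemma single_mem_derivedFlag {n i : ℕ} (x : Fin n → ℝ) (m : Fin n) (hm : n - 1 - i ≤ m.val) :
    Pi.single m 1 ∈ derivedFlag n i x :=
  Submodule.subset_span (Set.mem_insert_of_mem _ ⟨m, hm, rfl⟩)

lemma derivedFlag_le_ker {n i : ℕ} (x : Fin n → ℝ) (z t : Fin n) (hz : z.val = 0)
    (ht : t.val < n - 1 - i) :
    derivedFlag n i x ≤ LinearMap.ker
      (LinearMap.proj t - chainedB2 n x t • LinearMap.proj (R := ℝ) (φ := fun _ => ℝ) z) := by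
  have hb₂z : chainedB2 n x z = 1 := by simp [chainedB2, hz]
  refine Submodule.span_le.2 (Set.insert_subset ?_ ?_)
  · simp [hb₂z]
  · rintro _ ⟨m, hm, rfl⟩
    have hmz : m ≠ z := fun h => by subst h; omega
    have hmt : m ≠ t := fun h => by subst h; omega
    simp [hmz.symm, hmt.symm]

lemma single_notMem_derivedFlag {n i : ℕ} (x : Fin n → ℝ) (t : Fin n) (ht₀ : 0 < t.val)
    (ht : t.val < n - 1 - i) :
    Pi.single t 1 ∉ derivedFlag n i x := by
  intro hmem
  have hker := derivedFlag_le_ker x ⟨0, by omega⟩ t rfl ht hmem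
  have htz : (⟨0, by omega⟩ : Fin n) ≠ t := Fin.ne_of_val_ne (by simp; omega)
  simp [htz] at hker

/-- On ℝⁿ with n ≥ 4 and 1 ≤ i ≤ n−3:
(1) for every `k` with `n−i+1 ≤ k ≤ n` (1-based; 0-based index `k` with `n−i ≤ k`), the constant
vector field `e_k` satisfies `[e_k, b₂](x) = e_{k−1} ∈ D^{(i)}(x)` and `[e_k, e_j] = 0` for all
`j` (so `e_k` is a Cauchy characteristic vector field of `D^{(i)}`);
(2) `[e_{n−i}, b₂](x) = e_{n−i−1}`, and `e_{n−i−1} ∉ D^{(i)}(x)` for every `x`. -/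
theorem stmt2 (n : ℕ) (hn : 4 ≤ n) (i : ℕ) (hi2 : i ≤ n - 3)
    (x : Fin n → ℝ) :
    -- (1)
    ((∀ k : Fin n, n - i ≤ k.val →
      VectorField.lieBracket ℝ (fun _ => Pi.single k (1 : ℝ)) (chainedB2 n) x =
        Pi.single (⟨k.val - 1, Nat.lt_of_le_of_lt (Nat.sub_le _ _) k.isLt⟩ : Fin n) (1 : ℝ) ∧
      (Pi.single (⟨k.val - 1, Nat.lt_of_le_of_lt (Nat.sub_le _ _) k.isLt⟩ : Fin n) (1 : ℝ)
          ∈ derivedFlag n i x) ∧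
      (∀ j : Fin n, ∀ y : Fin n → ℝ,
        VectorField.lieBracket ℝ (fun _ => Pi.single k (1 : ℝ))
          (fun _ => Pi.single j (1 : ℝ)) y = 0))) ∧
    -- (2)
    (VectorField.lieBracket ℝ
        (fun _ => Pi.single (⟨n - 1 - i, by omega⟩ : Fin n) (1 : ℝ)) (chainedB2 n) x =
      Pi.single (⟨n - 2 - i, by omega⟩ : Fin n) (1 : ℝ) ∧
      Pi.single (⟨n - 2 - i, by omega⟩ : Fin n) (1 : ℝ) ∉ derivedFlag n i x) := by
  refine ⟨fun k hk => ⟨lieBracket_single_chainedB2 n k (by omega) x,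
    single_mem_derivedFlag x _ (by dsimp only; omega), fun j y => lieBracket_const_const _ _ y⟩,
    ?_, single_notMem_derivedFlag x _ (by dsimp only; omega) (by dsimp only; omega)⟩
  rw [lieBracket_single_chainedB2 n _ (by dsimp only; omega)]
  congr 2
  dsimp only
  omega
end

section
/- For the induction motor model, let v₄(x) = μψ_d² e_ω + ηM e_ρ. Then [e_{ψ_d}, v₄](x) = 2μψ_d e_ω for every x, and for every point x with ψ_d ≠ 0, μ ≠ 0 and ηM ≠ 0, the vector 2μψ_d e_ω does not belong to span{e_{I_d}, e_{I_q}, e_{ψ_d}, v₄(x)} ⊆ ℝ⁶; hence the distribution D₂ = span{e_{I_d}, e_{I_q}, e_{ψ_d}, v₄} is not involutive. -/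
/-- The i-th standard basis vector of ℝ⁶; coordinates are ordered
`(θ, ω, ψ_d, ρ, I_d, I_q)`. -/
noncomputable def e (i : Fin 6) : Fin 6 → ℝ := Pi.single i 1

/-- The vector field `v₄(x) = μψ_d² e_ω + ηM e_ρ` spanning `D₂` together with
`e_{I_d}, e_{I_q}, e_{ψ_d}` for the induction motor. -/
noncomputable def v4 (μ η M : ℝ) : (Fin 6 → ℝ) → (Fin 6 → ℝ) :=
  fun x => (μ * (x 2) ^ 2) • e 1 + (η * M) • e 3

/-!
Since `e_{ψ_d}` is constant, `[e_{ψ_d}, v₄] = Dv₄ · e_{ψ_d} = ∂v₄/∂ψ_d = 2μψ_d e_ω`.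
At a fixed point `x`, the generators `e_{I_d}, e_{I_q}, e_{ψ_d}, v₄(x)` all lie in the hyperplane
`ηM y_ω = μψ_d² y_ρ`, whereas `2μψ_d e_ω` does not once `μ ψ_d ηM ≠ 0`.
-/

open VectorField

theorem VectorField.lieBracket_const_left_s8 {𝕜 E : Type*} [NontriviallyNormedField 𝕜]
    [NormedAddCommGroup E] [NormedSpace 𝕜 E] (c : E) (W : E → E) (x : E) :
    lieBracket 𝕜 (fun _ => c) W x = fderiv 𝕜 W x c := by
  simp [lieBracket_eq]

theorem hasFDerivAt_v4 (μ η M : ℝ) (x : Fin 6 → ℝ) :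
    HasFDerivAt (v4 μ η M)
      (((2 * μ * x 2) • (ContinuousLinearMap.proj 2 : (Fin 6 → ℝ) →L[ℝ] ℝ)).smulRight (e 1)) x := by
  have hψ : HasFDerivAt (fun y : Fin 6 → ℝ => μ * y 2 ^ 2)
      ((2 * μ * x 2) • (ContinuousLinearMap.proj 2 : (Fin 6 → ℝ) →L[ℝ] ℝ)) x := by
    refine (((hasFDerivAt_apply (𝕜 := ℝ) 2 x).pow 2).const_mul μ).congr_fderiv ?_
    ext y
    simp only [smul_apply, ContinuousLinearMap.proj_apply, smul_eq_mul]
    ring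
  exact (hψ.smul_const (e 1)).add_const _

theorem lieBracket_e_v4 (μ η M : ℝ) (x : Fin 6 → ℝ) :
    lieBracket ℝ (fun _ => e 2) (v4 μ η M) x = (2 * μ * x 2) • e 1 := by
  simp [lieBracket_const_left_s8, (hasFDerivAt_v4 μ η M x).fderiv, e]

theorem span_e_v4_le_ker (μ η M : ℝ) (x : Fin 6 → ℝ) :
    Submodule.span ℝ ({e 4, e 5, e 2, v4 μ η M x} : Set (Fin 6 → ℝ)) ≤
      LinearMap.ker ((η * M) • LinearMap.proj 1 - (μ * x 2 ^ 2) • LinearMap.proj 3 :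
        (Fin 6 → ℝ) →ₗ[ℝ] ℝ) := by
  rw [Submodule.span_le]
  simp [Set.insert_subset_iff, e, v4, mul_comm]

/-- `[e_{ψ_d}, v₄](x) = 2μψ_d e_ω` for every `x`, and at every point with `ψ_d ≠ 0`,
`μ ≠ 0`, `ηM ≠ 0`, the vector `2μψ_d e_ω` does not belong to
`span{e_{I_d}, e_{I_q}, e_{ψ_d}, v₄(x)}`; hence `D₂` is not involutive. -/
theorem stmt8 (μ η M : ℝ) :
    (∀ x : Fin 6 → ℝ,
      VectorField.lieBracket ℝ (fun _ => e 2) (v4 μ η M) x = (2 * μ * x 2) • e 1) ∧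
    (∀ x : Fin 6 → ℝ, x 2 ≠ 0 → μ ≠ 0 → η * M ≠ 0 →
      (2 * μ * x 2) • e 1 ∉
        Submodule.span ℝ ({e 4, e 5, e 2, v4 μ η M x} : Set (Fin 6 → ℝ))) := by
  refine ⟨lieBracket_e_v4 μ η M, fun x hx hμ hηM hmem => ?_⟩
  simpa [e, hx, hμ, mul_ne_zero_iff.mp hηM] using span_e_v4_le_ker μ η M x hmem
end
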